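/- arXiv:1512.00153 — 7 statements merged into one kernel-verified Lean document; each statement's English description precedes it below -/
import Mathlib

section
/- Let $I$ be a finite set of servers partitioned into active servers $S$ and inactive servers $I \setminus S$. Suppose: (1) for each $i \notin S$, $W(A_i^*) \le C_i$ and $W(A_i) > C_i/2$; (2) $\sum_{i \in S} W(A_i^* \setminus A_i) \le 2 \sum_{i \in S} W(A_i \setminus A_i^*) + \sum_{i \notin S} W(A_i \setminus A_i^*)$. Then $\sum_{i \in I} W(A_i^*) \le 3 \sum_{i \in I} W(A_i)$. -/
/-- The 3-competitiveness inequality for OnlineGreedy. -/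
theorem stmt2 {ι β : Type*} [DecidableEq ι] [DecidableEq β]
    (I S : Finset ι) (hS : S ⊆ I)
    (C : ι → ℝ) (hC : ∀ i ∈ I, 0 < C i)
    (w : β → ℝ) (hw : ∀ e, 0 ≤ w e)
    (A Astar : ι → Finset β)
    (h1 : ∀ i ∈ I \ S, (∑ e ∈ Astar i, w e ≤ C i) ∧ (C i / 2 < ∑ e ∈ A i, w e))
    (h2 : ∑ i ∈ S, ∑ e ∈ Astar i \ A i, w e ≤
          2 * ∑ i ∈ S, ∑ e ∈ A i \ Astar i, w e
            + ∑ i ∈ I \ S, ∑ e ∈ A i \ Astar i, w e) :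
    ∑ i ∈ I, ∑ e ∈ Astar i, w e ≤ 3 * ∑ i ∈ I, ∑ e ∈ A i, w e := by
  have key : ∀ X Y : Finset β, ∑ e ∈ X, w e ≤ ∑ e ∈ X \ Y, w e + ∑ e ∈ Y, w e := by
    intro X Y
    have h1' : ∑ e ∈ X, w e ≤ ∑ e ∈ X \ Y ∪ Y, w e := by
      apply Finset.sum_le_sum_of_subset_of_nonneg
      · intro x hx
        simp [Finset.mem_union, Finset.mem_sdiff]
        tauto
      · intro e _ _; exact hw e
    rwa [Finset.sum_union Finset.sdiff_disjoint] at h1'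
  have sub : ∀ X Y : Finset β, ∑ e ∈ X \ Y, w e ≤ ∑ e ∈ X, w e := fun X Y =>
    Finset.sum_le_sum_of_subset_of_nonneg (Finset.sdiff_subset) (fun e _ _ => hw e)
  -- sums over S
  have hSsum : ∑ i ∈ S, ∑ e ∈ Astar i, w e ≤
      ∑ i ∈ S, ∑ e ∈ Astar i \ A i, w e + ∑ i ∈ S, ∑ e ∈ A i, w e := by
    rw [← Finset.sum_add_distrib]
    exact Finset.sum_le_sum fun i _ => key (Astar i) (A i)
  have hSsub : ∑ i ∈ S, ∑ e ∈ A i \ Astar i, w e ≤ ∑ i ∈ S, ∑ e ∈ A i, w e :=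
    Finset.sum_le_sum fun i _ => sub (A i) (Astar i)
  have hIsub : ∑ i ∈ I \ S, ∑ e ∈ A i \ Astar i, w e ≤ ∑ i ∈ I \ S, ∑ e ∈ A i, w e :=
    Finset.sum_le_sum fun i _ => sub (A i) (Astar i)
  -- sums over I \ S
  have hInact : ∑ i ∈ I \ S, ∑ e ∈ Astar i, w e ≤ 2 * ∑ i ∈ I \ S, ∑ e ∈ A i, w e := by
    rw [Finset.mul_sum]
    refine Finset.sum_le_sum fun i hi => ?_
    obtain ⟨hA, hB⟩ := h1 i hi
    linarith
  have hsplitA : ∑ i ∈ I \ S, ∑ e ∈ A i, w e + ∑ i ∈ S, ∑ e ∈ A i, w e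
      = ∑ i ∈ I, ∑ e ∈ A i, w e := Finset.sum_sdiff hS
  have hsplitAstar : ∑ i ∈ I \ S, ∑ e ∈ Astar i, w e + ∑ i ∈ S, ∑ e ∈ Astar i, w e
      = ∑ i ∈ I, ∑ e ∈ Astar i, w e := Finset.sum_sdiff hS
  linarith
end

section
/- Under the hypotheses of the 3-competitiveness argument generalized to maximum edge weight $\alpha C_i$ with $0 \le \alpha < 1$: if for each inactive server $i \notin S$ we have $W(A_i^*) \le C_i$ and $W(A_i) > (1-\alpha) C_i$, and the blocking inequality $\sum_{i \in S} W(A_i^* \setminus A_i) \le 2 \sum_{i \in S} W(A_i \setminus A_i^*) + \sum_{i \notin S} W(A_i \setminus A_i^*)$ holds, then $\sum_{i \in I} W(A_i^*) \le (1 + \frac{1}{1-\alpha}) \sum_{i \in I} W(A_i)$ provided $\frac{1}{1-\alpha} \ge 2$. -/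
/-- The `(1 + 1/(1-α))`-competitiveness inequality for OnlineGreedy
with edge weights at most `α` times the server capacity. -/
theorem stmt3 {ι β : Type*} [DecidableEq ι] [DecidableEq β]
    (I S : Finset ι) (hS : S ⊆ I) (α : ℝ) (hα0 : 0 ≤ α) (hα1 : α < 1)
    (hα2 : 2 ≤ 1 / (1 - α))
    (C : ι → ℝ) (hC : ∀ i ∈ I, 0 < C i)
    (w : β → ℝ) (hw : ∀ e, 0 ≤ w e)
    (A Astar : ι → Finset β)
    (h1 : ∀ i ∈ I \ S, (∑ e ∈ Astar i, w e ≤ C i) ∧ ((1 - α) * C i < ∑ e ∈ A i, w e))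
    (h2 : ∑ i ∈ S, ∑ e ∈ Astar i \ A i, w e ≤
          2 * ∑ i ∈ S, ∑ e ∈ A i \ Astar i, w e
            + ∑ i ∈ I \ S, ∑ e ∈ A i \ Astar i, w e) :
    ∑ i ∈ I, ∑ e ∈ Astar i, w e ≤ (1 + 1 / (1 - α)) * ∑ i ∈ I, ∑ e ∈ A i, w e := by
  have h1α : (0:ℝ) < 1 - α := by linarith
  set ρ : ℝ := 1 / (1 - α) with hρ
  have hρpos : 0 < ρ := by positivity
  -- split sums over I into I \ S and S
  have hsplitA : ∑ i ∈ I \ S, ∑ e ∈ A i, w e + ∑ i ∈ S, ∑ e ∈ A i, w e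
      = ∑ i ∈ I, ∑ e ∈ A i, w e := Finset.sum_sdiff hS
  have hsplitAs : ∑ i ∈ I \ S, ∑ e ∈ Astar i, w e + ∑ i ∈ S, ∑ e ∈ Astar i, w e
      = ∑ i ∈ I, ∑ e ∈ Astar i, w e := Finset.sum_sdiff hS
  -- inactive servers: W(A* i) ≤ ρ * W(A i)
  have hB : ∑ i ∈ I \ S, ∑ e ∈ Astar i, w e ≤ ρ * ∑ i ∈ I \ S, ∑ e ∈ A i, w e := by
    rw [Finset.mul_sum]
    refine Finset.sum_le_sum fun i hi => ?_
    obtain ⟨h1a, h1b⟩ := h1 i hi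
    have hCi : 0 < C i := hC i (Finset.sdiff_subset hi)
    have : C i ≤ ρ * ∑ e ∈ A i, w e := by
      rw [hρ, div_mul_eq_mul_div, le_div_iff₀ h1α]
      nlinarith
    linarith
  -- active servers
  have hSle : ∑ i ∈ S, ∑ e ∈ Astar i, w e
      ≤ ∑ i ∈ S, ∑ e ∈ A i, w e + ∑ i ∈ S, ∑ e ∈ Astar i \ A i, w e := by
    have := Finset.sum_le_sum (s := S) fun i (_ : i ∈ S) => by
      have e1 : ∑ e ∈ Astar i ∩ A i, w e + ∑ e ∈ Astar i \ A i, w e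
          = ∑ e ∈ Astar i, w e := Finset.sum_inter_add_sum_sdiff _ _ _
      have e2 : ∑ e ∈ Astar i ∩ A i, w e ≤ ∑ e ∈ A i, w e :=
        Finset.sum_le_sum_of_subset_of_nonneg Finset.inter_subset_right
          (fun e _ _ => hw e)
      show ∑ e ∈ Astar i, w e ≤ ∑ e ∈ A i, w e + ∑ e ∈ Astar i \ A i, w e
      linarith
    calc ∑ i ∈ S, ∑ e ∈ Astar i, w e
        ≤ ∑ i ∈ S, (∑ e ∈ A i, w e + ∑ e ∈ Astar i \ A i, w e) := this
      _ = _ := Finset.sum_add_distrib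
  have hd1 : ∑ i ∈ S, ∑ e ∈ A i \ Astar i, w e ≤ ∑ i ∈ S, ∑ e ∈ A i, w e :=
    Finset.sum_le_sum fun i _ =>
      Finset.sum_le_sum_of_subset_of_nonneg (Finset.sdiff_subset) (fun e _ _ => hw e)
  have hd2 : ∑ i ∈ I \ S, ∑ e ∈ A i \ Astar i, w e ≤ ∑ i ∈ I \ S, ∑ e ∈ A i, w e :=
    Finset.sum_le_sum fun i _ =>
      Finset.sum_le_sum_of_subset_of_nonneg (Finset.sdiff_subset) (fun e _ _ => hw e)
  have ha : 0 ≤ ∑ i ∈ S, ∑ e ∈ A i, w e :=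
    Finset.sum_nonneg fun i _ => Finset.sum_nonneg fun e _ => hw e
  nlinarith [hSle, hB, h2, hd1, hd2, ha, hsplitA, hsplitAs]
end

section
/- Suppose nonnegative reals $w_1, \dots, w_m \le C$ arrive in order and are tentatively accepted while the running tentative sum is at most $C/2$ (the server is deactivated once the tentative sum exceeds $C/2$). Let $H$ be the set of accepted weights exceeding $C/2$ and $L$ the set of accepted weights at most $C/2$. Then $|H| \le 1$, $\sum_{w \in H} w \le C$, and $\sum_{w \in L} w \le C$. -/
/-- The list of tentatively accepted weights: starting from current sum `s`, a
weight is accepted iff the current tentative sum is at most `C/2`. -/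
noncomputable def acceptList (C : ℝ) : ℝ → List ℝ → List ℝ
  | _, [] => []
  | s, x :: xs => if s ≤ C / 2 then x :: acceptList C (s + x) xs
                  else acceptList C s xs

lemma acceptList_of_gt (C s : ℝ) (h : ¬ s ≤ C / 2) :
    ∀ l : List ℝ, acceptList C s l = [] := by
  intro l
  induction l with
  | nil => simp [acceptList]
  | cons x xs ih => simp [acceptList, h, ih]

lemma stmt7_aux (C : ℝ) (hC : 0 < C) (l : List ℝ) :
    ∀ s : ℝ, 0 ≤ s → (∀ x ∈ l, 0 ≤ x ∧ x ≤ C) →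
    ((acceptList C s l).filter (fun x => decide (C / 2 < x))).length ≤ 1 ∧
    ((acceptList C s l).filter (fun x => decide (C / 2 < x))).sum ≤ C ∧
    (s ≤ C / 2 → s + ((acceptList C s l).filter (fun x => decide (x ≤ C / 2))).sum ≤ C) := by
  induction l with
  | nil =>
    intro s hs _
    refine ⟨by simp [acceptList], by simp [acceptList]; linarith, ?_⟩
    intro hsC
    simp only [acceptList, List.filter_nil, List.sum_nil, add_zero]
    linarith
  | cons x xs ih =>
    intro s hs hw
    obtain ⟨hx0, hxC⟩ := hw x (by simp)
    have hw' : ∀ y ∈ xs, 0 ≤ y ∧ y ≤ C := fun y hy => hw y (by simp [hy])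
    by_cases hsle : s ≤ C / 2
    · have hacc : acceptList C s (x :: xs) = x :: acceptList C (s + x) xs := by
        simp [acceptList, hsle]
      by_cases hheavy : C / 2 < x
      · -- heavy: then s + x > C/2, so the rest is empty
        have hgt : ¬ s + x ≤ C / 2 := by push_neg; linarith
        have hempty := acceptList_of_gt C (s + x) hgt xs
        rw [hacc, hempty]
        refine ⟨?_, ?_, ?_⟩
        · simp [hheavy]
        · simp [hheavy]; linarith
        · intro _
          simp [not_lt.mpr, hheavy, show ¬ x ≤ C / 2 from not_le.mpr hheavy]
          linarith
      · -- light
        have hxle : x ≤ C / 2 := not_lt.mp hheavy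
        have ihx := ih (s + x) (by linarith) hw'
        rw [hacc]
        refine ⟨?_, ?_, ?_⟩
        · simpa [hheavy] using ihx.1
        · simpa [hheavy] using ihx.2.1
        · intro _
          by_cases hsx : s + x ≤ C / 2
          · have := ihx.2.2 hsx
            simp only [List.filter_cons, decide_eq_true_eq, hxle, if_pos, List.sum_cons]
            linarith
          · have hempty := acceptList_of_gt C (s + x) hsx xs
            rw [hempty]
            simp [hxle]
            linarith
    · have hempty := acceptList_of_gt C s hsle (x :: xs)
      rw [hempty]
      exact ⟨by simp, by simp; linarith, fun hcon => absurd hcon hsle⟩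

/-- with weights in `[0, C]`, among the tentatively accepted
weights there is at most one heavy one (`> C/2`), the heavy ones sum to at most
`C`, and the light ones (`≤ C/2`) sum to at most `C`. -/
theorem stmt7 (C : ℝ) (hC : 0 < C) (l : List ℝ)
    (h : ∀ x ∈ l, 0 ≤ x ∧ x ≤ C) :
    ((acceptList C 0 l).filter (fun x => decide (C / 2 < x))).length ≤ 1 ∧
    ((acceptList C 0 l).filter (fun x => decide (C / 2 < x))).sum ≤ C ∧
    ((acceptList C 0 l).filter (fun x => decide (x ≤ C / 2))).sum ≤ C := by
  have := stmt7_aux C hC l 0 le_rfl h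
  refine ⟨this.1, this.2.1, ?_⟩
  have h3 := this.2.2 (by linarith)
  linarith
end

section
/- Consider $n$ parallel servers each with remaining capacities $r_1, \dots, r_n$ satisfying $|r_i - r_{i'}| \le \epsilon$ for all $i, i'$. If in one round each server $i$ is assigned at most one job of weight $w_i \in [0, \epsilon]$, where servers with larger remaining capacity receive jobs of weight at least as large as servers with smaller remaining capacity (the load-balancing rule), then after the round the new remaining capacities $r_i - w_i$ still pairwise differ by at most $\epsilon$. -/
/-- the load-balancing invariant. If remaining capacities pairwise
differ by at most `ε`, each server receives at most one job of weight in
`[0, ε]`, and servers with strictly larger remaining capacity receive jobs of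
weight at least as large, then the new remaining capacities still pairwise
differ by at most `ε`. -/
theorem stmt9 (n : ℕ) (ε : ℝ) (hε : 0 < ε) (r w : Fin n → ℝ)
    (hr : ∀ i i', |r i - r i'| ≤ ε)
    (hw : ∀ i, 0 ≤ w i ∧ w i ≤ ε)
    (hmono : ∀ i i', r i' < r i → w i' ≤ w i) :
    ∀ i i', |(r i - w i) - (r i' - w i')| ≤ ε := by
  intro i i'
  have h1 := hr i i'
  obtain ⟨h2, h2'⟩ := hw i
  obtain ⟨h3, h3'⟩ := hw i'
  rw [abs_le] at h1 ⊢
  rcases lt_trichotomy (r i) (r i') with h | h | h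
  · have := hmono i' i h
    constructor <;> linarith
  · constructor <;> linarith
  · have := hmono i i' h
    constructor <;> linarith
end

section
/- Let an algorithm assign jobs to $n$ identical servers of capacity $C$, with all job weights in $[0, \epsilon]$ where $2\epsilon < C$. If the algorithm either (a) at every time step assigns the $n$ largest-weight available jobs (in which case it is optimal), or (b) terminates when every server $i$ has assigned weight $W(A_i) \ge C - 2\epsilon$, then the total assigned weight is at least $(1 - 2\epsilon/C)$ times the optimal total weight. -/
/-!
If the algorithm is optimal there is nothing to prove, since `1 - 2ε/C ≤ 1`. Otherwise each
of the `n` servers carries at least `C - 2ε`, so the total is at least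
`n (C - 2ε) = (1 - 2ε/C) · nC`, and `nC` bounds the optimum.
-/

theorem one_sub_div_mul_le_mul_sub {C δ OPT : ℝ} (n : ℕ) (hC : 0 < C) (hδC : δ ≤ C)
    (hOPT : OPT ≤ n * C) : (1 - δ / C) * OPT ≤ n * (C - δ) := by
  have hfactor : 0 ≤ 1 - δ / C := sub_nonneg.mpr ((div_le_one hC).mpr hδC)
  calc (1 - δ / C) * OPT ≤ (1 - δ / C) * (n * C) := mul_le_mul_of_nonneg_left hOPT hfactor
    _ = n * (C - δ) := by field_simp

/-- if the algorithm is either optimal, or terminates with every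
server loaded to at least `C - 2ε`, then its total weight is at least
`(1 - 2ε/C)` times the optimum (which is at most `n·C`). -/
theorem stmt10 (n : ℕ) (C ε OPT : ℝ) (hC : 0 < C) (hε : 0 ≤ ε) (h2ε : 2 * ε < C)
    (hOPT0 : 0 ≤ OPT) (hOPTnC : OPT ≤ n * C) (A : Fin n → ℝ)
    (hcase : (∑ i, A i) = OPT ∨ (∀ i, C - 2 * ε ≤ A i)) :
    (1 - 2 * ε / C) * OPT ≤ ∑ i, A i := by
  rcases hcase with hopt | hloaded
  · rw [hopt]
    have hratio : 0 ≤ 2 * ε / C := by positivity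
    exact mul_le_of_le_one_left hOPT0 (by linarith)
  · calc (1 - 2 * ε / C) * OPT ≤ n * (C - 2 * ε) :=
          one_sub_div_mul_le_mul_sub n hC h2ε.le hOPTnC
      _ ≤ ∑ i, A i := by
          simpa using Finset.card_nsmul_le_sum Finset.univ A _ fun i _ => hloaded i
end

section
/- Greedy matching is 2-approximate: if $M$ is the matching output by the greedy algorithm (edges processed in decreasing weight order, added when both endpoints are unmatched) and $M^*$ is any matching in the same weighted graph, then $W(M^*) \le 2 W(M)$. -/
/-!
Charge every edge `e` of `M*` to a greedy edge `g` that shares an endpoint with it and has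
`w e ≤ w g`: if `e` was rejected, some earlier (hence heavier) kept edge blocked it, and if
`e` was kept, `g = e`. Since `M*` is a matching, each greedy edge is charged at most twice,
once per endpoint.
-/

/-- Two edges (server, job) are compatible if they share no endpoint. -/
def compatEdge (e f : ℕ × ℕ) : Bool := (e.1 != f.1) && (e.2 != f.2)

/-- Greedy matching: scan the edges in the given order (assumed sorted by
decreasing weight), keeping an edge iff it is compatible with all kept edges. -/
def greedyAux : List (ℕ × ℕ) → List (ℕ × ℕ) → List (ℕ × ℕ)
  | acc, [] => acc
  | acc, e :: es =>
      if acc.all (compatEdge e) then greedyAux (e :: acc) es else greedyAux acc es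

def greedyMatch (l : List (ℕ × ℕ)) : List (ℕ × ℕ) := greedyAux [] l

/-- A set of edges is a matching if distinct edges share no endpoint. -/
def IsMatching (M : Finset (ℕ × ℕ)) : Prop :=
  ∀ e ∈ M, ∀ f ∈ M, e ≠ f → e.1 ≠ f.1 ∧ e.2 ≠ f.2

open Finset

def SharesEndpoint (e f : ℕ × ℕ) : Prop := e.1 = f.1 ∨ e.2 = f.2

theorem compatEdge_eq_false_iff {e f : ℕ × ℕ} : compatEdge e f = false ↔ SharesEndpoint e f := by
  simp [compatEdge, SharesEndpoint, or_iff_not_imp_left]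

theorem Finset.sum_le_mul_sum_of_dominated {α β : Type*} {s : Finset α} {t : Finset β}
    (r : α → β → Prop) [DecidableRel r] {w : α → ℝ} {v : β → ℝ} {n : ℕ}
    (hv : ∀ b ∈ t, 0 ≤ v b) (hdom : ∀ a ∈ s, ∃ b ∈ t, r a b ∧ w a ≤ v b)
    (hdeg : ∀ b ∈ t, #{a ∈ s | r a b} ≤ n) :
    ∑ a ∈ s, w a ≤ n * ∑ b ∈ t, v b := by
  calc ∑ a ∈ s, w a ≤ ∑ a ∈ s, ∑ b ∈ t with r a b, v b := by
        refine sum_le_sum fun a ha => ?_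
        obtain ⟨b, hb, hab, hle⟩ := hdom a ha
        exact hle.trans <| single_le_sum (fun b hb => hv b (mem_filter.1 hb).1)
          (mem_filter.2 ⟨hb, hab⟩)
    _ = ∑ b ∈ t, #{a ∈ s | r a b} * v b := by
        rw [sum_comm' (t' := t) (s' := fun b => {a ∈ s | r a b}) (by aesop)]
        simp_rw [sum_const, nsmul_eq_mul]
    _ ≤ ∑ b ∈ t, n * v b := by
        gcongr with b hb
        · exact hv b hb
        · exact_mod_cast hdeg b hb
    _ = n * ∑ b ∈ t, v b := (mul_sum ..).symm

theorem IsMatching.card_filter_sharesEndpoint_le_two {M : Finset (ℕ × ℕ)} (hM : IsMatching M)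
    (g : ℕ × ℕ) [DecidablePred (SharesEndpoint · g)] : #{e ∈ M | SharesEndpoint e g} ≤ 2 := by
  have hfst : #{e ∈ M | e.1 = g.1} ≤ 1 := card_le_one.2 fun a ha b hb => by
    rw [mem_filter] at ha hb
    by_contra hab
    exact (hM a ha.1 b hb.1 hab).1 (ha.2.trans hb.2.symm)
  have hsnd : #{e ∈ M | e.2 = g.2} ≤ 1 := card_le_one.2 fun a ha b hb => by
    rw [mem_filter] at ha hb
    by_contra hab
    exact (hM a ha.1 b hb.1 hab).2 (ha.2.trans hb.2.symm)
  calc #{e ∈ M | SharesEndpoint e g}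
      = #({e ∈ M | e.1 = g.1} ∪ {e ∈ M | e.2 = g.2}) := by
        rw [← filter_or]; congr
    _ ≤ 2 := (card_union_le _ _).trans (by omega)

theorem subset_greedyAux : ∀ (acc l : List (ℕ × ℕ)), acc ⊆ greedyAux acc l
  | _, [] => List.Subset.refl _
  | acc, e :: es => by
    unfold greedyAux
    split
    · exact List.Subset.trans (List.subset_cons_self e acc) (subset_greedyAux _ es)
    · exact subset_greedyAux acc es

theorem nodup_greedyAux : ∀ {acc : List (ℕ × ℕ)} (l : List (ℕ × ℕ)), acc.Nodup →
    (greedyAux acc l).Nodup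
  | _, [], h => h
  | acc, e :: es, h => by
    unfold greedyAux
    split
    · rename_i hcompat
      refine nodup_greedyAux es (List.nodup_cons.2 ⟨fun he => ?_, h⟩)
      simpa [compatEdge] using List.all_eq_true.1 hcompat e he
    · exact nodup_greedyAux es h

theorem exists_sharesEndpoint_mem_greedyAux (w : ℕ × ℕ → ℝ) :
    ∀ {acc : List (ℕ × ℕ)} (l : List (ℕ × ℕ)), l.Pairwise (fun a b => w b ≤ w a) →
      (∀ a ∈ acc, ∀ e ∈ l, w e ≤ w a) →
      ∀ e ∈ l, ∃ g ∈ greedyAux acc l, SharesEndpoint e g ∧ w e ≤ w g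
  | _, [], _, _, _, he => absurd he List.not_mem_nil
  | acc, f :: es, hsort, hacc, e, he => by
    rw [List.pairwise_cons] at hsort
    have hacc_es : ∀ a ∈ acc, ∀ e ∈ es, w e ≤ w a := fun a ha e he =>
      hacc a ha e (List.mem_cons_of_mem f he)
    unfold greedyAux
    split
    · rcases List.mem_cons.1 he with rfl | he
      · exact ⟨e, subset_greedyAux _ es List.mem_cons_self, Or.inl rfl, le_rfl⟩
      · refine exists_sharesEndpoint_mem_greedyAux w es hsort.2 (fun a ha => ?_) e he
        rcases List.mem_cons.1 ha with rfl | ha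
        exacts [hsort.1, hacc_es a ha]
    · rename_i hblocked
      rcases List.mem_cons.1 he with rfl | he
      · obtain ⟨a, ha, hcompat⟩ := List.all_eq_false.1 (Bool.eq_false_iff.2 hblocked)
        exact ⟨a, subset_greedyAux acc es ha,
          compatEdge_eq_false_iff.1 (Bool.eq_false_iff.2 hcompat), hacc a ha e List.mem_cons_self⟩
      · exact exists_sharesEndpoint_mem_greedyAux w es hsort.2 hacc_es e he

/-- greedy matching is 2-approximate: for any matching `M*` in
the same graph, `W(M*) ≤ 2 W(M)` where `M` is the greedy matching. -/
theorem stmt16 (w : ℕ × ℕ → ℝ) (hw : ∀ e, 0 ≤ w e) (l : List (ℕ × ℕ))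
    (hsort : l.Pairwise (fun a b => w b ≤ w a))
    (Mstar : Finset (ℕ × ℕ)) (hM : IsMatching Mstar) (hsub : ∀ e ∈ Mstar, e ∈ l) :
    ∑ e ∈ Mstar, w e ≤ 2 * ((greedyMatch l).map w).sum := by
  classical
  have hnodup : (greedyMatch l).Nodup := nodup_greedyAux l List.nodup_nil
  rw [← List.sum_toFinset w hnodup]
  have hcharge : ∀ e ∈ Mstar, ∃ g ∈ (greedyMatch l).toFinset, SharesEndpoint e g ∧ w e ≤ w g :=
    fun e he => by
      obtain ⟨g, hg, hshare, hle⟩ :=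
        exists_sharesEndpoint_mem_greedyAux w (acc := []) l hsort (by simp) e (hsub e he)
      exact ⟨g, List.mem_toFinset.2 hg, hshare, hle⟩
  exact_mod_cast Finset.sum_le_mul_sum_of_dominated SharesEndpoint (fun g _ => hw g) hcharge
    fun g _ => hM.card_filter_sharesEndpoint_le_two g
end

section
/- Let $B_i$, $i = 1, \dots, n$, be finite weighted sets and let $A_i^*$ with $W(A_i^*) \le C_i$ be the optimal allocation. Suppose for inactive servers ($i \notin S$), $W(B_i) > C_i / 2$, and the blocking inequality $\sum_{i \in S} W(A_i^* \setminus B_i) \le 2\sum_{i \in S} W(B_i \setminus A_i^*) + \sum_{i \notin S} W(B_i \setminus A_i^*)$ holds. Then $\sum_{i=1}^n W(A_i^*) \le 3 \sum_{i=1}^n W(B_i)$. -/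
/-- Lemma 2 of the RandomOnlineGreedy analysis: the tentative
allocation `B` is a 1/3-approximation to the optimum. -/
theorem stmt18 {β : Type*} [DecidableEq β] (n : ℕ) (S : Finset (Fin n))
    (C : Fin n → ℝ) (hC : ∀ i, 0 < C i)
    (w : β → ℝ) (hw : ∀ e, 0 ≤ w e)
    (B Astar : Fin n → Finset β)
    (hopt : ∀ i, ∑ e ∈ Astar i, w e ≤ C i)
    (hin : ∀ i ∉ S, C i / 2 < ∑ e ∈ B i, w e)
    (h2 : ∑ i ∈ S, ∑ e ∈ Astar i \ B i, w e ≤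
          2 * ∑ i ∈ S, ∑ e ∈ B i \ Astar i, w e
            + ∑ i ∈ Sᶜ, ∑ e ∈ B i \ Astar i, w e) :
    ∑ i, ∑ e ∈ Astar i, w e ≤ 3 * ∑ i, ∑ e ∈ B i, w e := by
  have hsplitA : ∀ i, ∑ e ∈ Astar i, w e
      = ∑ e ∈ Astar i ∩ B i, w e + ∑ e ∈ Astar i \ B i, w e := by
    intro i; rw [Finset.sum_inter_add_sum_sdiff]
  have hsplitB : ∀ i, ∑ e ∈ B i, w e
      = ∑ e ∈ B i ∩ Astar i, w e + ∑ e ∈ B i \ Astar i, w e := by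
    intro i; rw [Finset.sum_inter_add_sum_sdiff]
  have hinter : ∀ i, ∑ e ∈ Astar i ∩ B i, w e = ∑ e ∈ B i ∩ Astar i, w e := by
    intro i; rw [Finset.inter_comm]
  -- decompose total sums over S and Sᶜ
  have hA : ∑ i, ∑ e ∈ Astar i, w e
      = ∑ i ∈ S, ∑ e ∈ Astar i, w e + ∑ i ∈ Sᶜ, ∑ e ∈ Astar i, w e := by
    rw [Finset.sum_add_sum_compl]
  have hB : ∑ i, ∑ e ∈ B i, w e
      = ∑ i ∈ S, ∑ e ∈ B i, w e + ∑ i ∈ Sᶜ, ∑ e ∈ B i, w e := by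
    rw [Finset.sum_add_sum_compl]
  -- bound on S
  have hS : ∑ i ∈ S, ∑ e ∈ Astar i, w e
      ≤ 2 * ∑ i ∈ S, ∑ e ∈ B i, w e + ∑ i ∈ Sᶜ, ∑ e ∈ B i \ Astar i, w e := by
    calc ∑ i ∈ S, ∑ e ∈ Astar i, w e
        = ∑ i ∈ S, ∑ e ∈ Astar i ∩ B i, w e + ∑ i ∈ S, ∑ e ∈ Astar i \ B i, w e := by
          rw [← Finset.sum_add_distrib]; exact Finset.sum_congr rfl fun i _ => hsplitA i
      _ ≤ ∑ i ∈ S, ∑ e ∈ B i ∩ Astar i, w e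
            + (2 * ∑ i ∈ S, ∑ e ∈ B i \ Astar i, w e
              + ∑ i ∈ Sᶜ, ∑ e ∈ B i \ Astar i, w e) := by
          apply add_le_add _ h2
          exact le_of_eq (Finset.sum_congr rfl fun i _ => hinter i)
      _ ≤ 2 * ∑ i ∈ S, ∑ e ∈ B i, w e + ∑ i ∈ Sᶜ, ∑ e ∈ B i \ Astar i, w e := by
          have : ∑ i ∈ S, ∑ e ∈ B i ∩ Astar i, w e
              + 2 * ∑ i ∈ S, ∑ e ∈ B i \ Astar i, w e
              ≤ 2 * ∑ i ∈ S, ∑ e ∈ B i, w e := by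
            have h1 : ∑ i ∈ S, ∑ e ∈ B i ∩ Astar i, w e
                + ∑ i ∈ S, ∑ e ∈ B i \ Astar i, w e = ∑ i ∈ S, ∑ e ∈ B i, w e := by
              rw [← Finset.sum_add_distrib]
              exact Finset.sum_congr rfl fun i _ => (hsplitB i).symm
            have h2' : (0:ℝ) ≤ ∑ i ∈ S, ∑ e ∈ B i ∩ Astar i, w e :=
              Finset.sum_nonneg fun i _ => Finset.sum_nonneg fun e _ => hw e
            nlinarith
          linarith
  -- bound on Sᶜ
  have hSc : ∑ i ∈ Sᶜ, ∑ e ∈ Astar i, w e ≤ 2 * ∑ i ∈ Sᶜ, ∑ e ∈ B i, w e := by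
    calc ∑ i ∈ Sᶜ, ∑ e ∈ Astar i, w e ≤ ∑ i ∈ Sᶜ, C i :=
          Finset.sum_le_sum fun i _ => hopt i
      _ ≤ ∑ i ∈ Sᶜ, 2 * ∑ e ∈ B i, w e := by
          apply Finset.sum_le_sum
          intro i hi
          have := hin i (Finset.mem_compl.mp hi)
          linarith
      _ = 2 * ∑ i ∈ Sᶜ, ∑ e ∈ B i, w e := by rw [Finset.mul_sum]
  have hdiff : ∑ i ∈ Sᶜ, ∑ e ∈ B i \ Astar i, w e ≤ ∑ i ∈ Sᶜ, ∑ e ∈ B i, w e := by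
    apply Finset.sum_le_sum
    intro i _
    exact Finset.sum_le_sum_of_subset_of_nonneg (Finset.sdiff_subset) fun e _ _ => hw e
  have hpos : (0:ℝ) ≤ ∑ i ∈ S, ∑ e ∈ B i, w e :=
    Finset.sum_nonneg fun i _ => Finset.sum_nonneg fun e _ => hw e
  rw [hA, hB]
  linarith
end
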